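/- arXiv:2107.02360 — 2 statements merged into one kernel-verified Lean document; each statement's English description precedes it below -/
import Mathlib

section
/- Let G be a group and ρ : G → GL(V) a finite-dimensional complex representation that is semisimple. Then any two ℝ-structures of ρ are isomorphic as real representations of G. -/
/-!
An `ℝ`-form `W` of `V` is the fixed space of the antilinear involution `σ_W : a + i b ↦ a - i b`
(`a, b ∈ W`), and a `ℂ`-linear map preserving `W` commutes with `σ_W`. For two forms `W₀, W₁`,
`τ = σ₁ ∘ σ₀` is `ℂ`-linear and commutes with the `G`-action, and so do the maps
`A_c = 1 + τ + c • i (τ - 1)`. For real `c` they satisfy `σ₁ ∘ A_c = A_c ∘ σ₀`, while `A_i = 2`.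
So `c ↦ det A_c` is a nonzero polynomial, hence nonzero at some real `c`, and that `A_c`
restricts to a `G`-equivariant `ℝ`-linear isomorphism `W₀ ≃ W₁`.
-/

namespace LinearMap

open Polynomial

variable {K M : Type*} [CommRing K] [AddCommGroup M] [Module K M]
  [Module.Free K M] [Module.Finite K M]

theorem exists_polynomial_eval_eq_det_add_smul (A B : Module.End K M) :
    ∃ p : K[X], ∀ c : K, p.eval c = LinearMap.det (A + c • B) := by
  classical
  let b := Module.Free.chooseBasis K M
  refine ⟨((toMatrix b b A).map C + (X : K[X]) • (toMatrix b b B).map C).det, fun c => ?_⟩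
  rw [← det_toMatrix b, map_add, map_smul, ← coe_evalRingHom, RingHom.map_det]
  congr 1
  ext i j
  simp only [RingHom.mapMatrix_apply, coe_evalRingHom, Matrix.map_apply, Matrix.add_apply,
    Matrix.smul_apply, smul_eq_mul, X_mul_C, eval_add, eval_C, eval_mul, eval_X]
  ring

theorem exists_mem_det_add_smul_ne_zero [IsDomain K] (A B : Module.End K M) {c : K}
    (hc : LinearMap.det (A + c • B) ≠ 0) {S : Set K} (hS : S.Infinite) :
    ∃ z ∈ S, LinearMap.det (A + z • B) ≠ 0 := by
  obtain ⟨p, hp⟩ := exists_polynomial_eval_eq_det_add_smul A B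
  have hp0 : p ≠ 0 := by
    rintro rfl
    simp [← hp] at hc
  by_contra! hzero
  exact hS ((p.finite_setOfPred_isRoot hp0).subset fun z hz => by simp [hp, hzero z hz])

end LinearMap

section

open Complex

variable {V : Type*} [AddCommGroup V] [Module ℂ V] [Module ℝ V] [IsScalarTower ℝ ℂ V]

theorem Complex.smul_eq_re_smul_add_im_smul (c : ℂ) (v : V) :
    c • v = c.re • v + c.im • (I • v) := by
  rw [← algebraMap_smul ℂ c.re, ← algebraMap_smul ℂ c.im, smul_smul, ← add_smul]
  simp

def IsRealForm (W : Submodule ℝ V) : Prop :=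
  Function.Bijective fun p : W × W => (p.1 : V) + I • (p.2 : V)

namespace IsRealForm

variable {W : Submodule ℝ V} (h : IsRealForm W)

noncomputable def equiv : (W × W) ≃ₗ[ℝ] V :=
  LinearEquiv.ofBijective (W.subtype.coprod (I • W.subtype)) h

theorem equiv_apply (p : W × W) : h.equiv p = (p.1 : V) + I • (p.2 : V) := rfl

theorem I_smul_equiv_apply (a b : W) : I • h.equiv (a, b) = h.equiv (-b, a) := by
  simp only [equiv_apply, smul_add, smul_smul, I_mul_I, neg_one_smul, Submodule.coe_neg]
  abel

noncomputable def conj : V →ₗ⋆[ℂ] V :=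
  { h.equiv.toLinearMap ∘ₗ (LinearMap.id.prodMap (-LinearMap.id)) ∘ₗ h.equiv.symm.toLinearMap with
    map_smul' := fun c v => by
      set f := h.equiv.toLinearMap ∘ₗ (LinearMap.id.prodMap (-LinearMap.id)) ∘ₗ
        h.equiv.symm.toLinearMap
      have f_I_smul : ∀ v, f (I • v) = -(I • f v) := by
        intro v
        obtain ⟨⟨a, b⟩, rfl⟩ := h.equiv.surjective v
        simp only [f, I_smul_equiv_apply, LinearMap.coe_comp, LinearEquiv.coe_coe,
          Function.comp_apply, LinearEquiv.symm_apply_apply, LinearMap.prodMap_apply,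
          LinearMap.id_coe, id_eq, LinearMap.neg_apply, neg_neg]
        rw [← map_neg, Prod.neg_mk]
      change f (c • v) = _ • f v
      rw [smul_eq_re_smul_add_im_smul c v, map_add, map_smul, map_smul, f_I_smul,
        smul_eq_re_smul_add_im_smul ((starRingEnd ℂ) c)]
      simp }

theorem conj_equiv_apply (p : W × W) : h.conj (h.equiv p) = h.equiv (p.1, -p.2) := by
  simp [conj]

theorem conj_conj (v : V) : h.conj (h.conj v) = v := by
  obtain ⟨p, rfl⟩ := h.equiv.surjective v
  simp [conj_equiv_apply]

theorem conj_eq_self_iff {v : V} : h.conj v = v ↔ v ∈ W := by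
  obtain ⟨⟨a, b⟩, rfl⟩ := h.equiv.surjective v
  have equiv_coe : ∀ w : W, h.equiv (w, 0) = w := by simp [equiv_apply]
  have neg_eq_self_iff : -b = b ↔ b = 0 := by
    rw [neg_eq_iff_add_eq_zero, ← two_smul ℝ, smul_eq_zero_iff_right two_ne_zero]
  rw [conj_equiv_apply, h.equiv.injective.eq_iff, Prod.mk.injEq, neg_eq_self_iff]
  constructor
  · rintro ⟨-, rfl⟩
    exact equiv_coe a ▸ a.2
  · intro hv
    exact ⟨rfl, (Prod.ext_iff.mp (h.equiv.injective (equiv_coe ⟨_, hv⟩))).2.symm⟩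

theorem conj_map_of_mapsTo (f : V →ₗ[ℂ] V) (hf : ∀ v ∈ W, f v ∈ W) (v : V) :
    h.conj (f v) = f (h.conj v) := by
  obtain ⟨⟨a, b⟩, rfl⟩ := h.equiv.surjective v
  have f_equiv : ∀ a b : W,
      f (h.equiv (a, b)) = h.equiv (⟨f a, hf a a.2⟩, ⟨f b, hf b b.2⟩) := by
    intro a b
    simp [equiv_apply]
  rw [f_equiv, conj_equiv_apply, conj_equiv_apply, f_equiv]
  congr 2
  ext
  simp

variable {W₀ W₁ : Submodule ℝ V} (h₀ : IsRealForm W₀) (h₁ : IsRealForm W₁)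

/-- `1 + τ` and `i (τ - 1)`, with `τ = σ₁ ∘ σ₀`, are twice the real and imaginary parts of the
identity for the real structure `f ↦ σ₁ ∘ f ∘ σ₀` on `End V`. -/
noncomputable def intertwiner (c : ℂ) : Module.End ℂ V :=
  1 + h₁.conj.comp h₀.conj + c • (I • (h₁.conj.comp h₀.conj - 1))

theorem intertwiner_apply (c : ℂ) (v : V) :
    h₀.intertwiner h₁ c v = v + h₁.conj (h₀.conj v) + c • (I • (h₁.conj (h₀.conj v) - v)) := by
  simp [intertwiner]

theorem conj_intertwiner_ofReal (x : ℝ) (v : V) :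
    h₁.conj (h₀.intertwiner h₁ x v) = h₀.intertwiner h₁ x (h₀.conj v) := by
  rw [intertwiner_apply, intertwiner_apply, map_add, map_add, map_smulₛₗ, map_smulₛₗ, map_sub,
    conj_conj, conj_conj, conj_ofReal, conj_I]
  module

theorem intertwiner_I : h₀.intertwiner h₁ I = (2 : ℂ) • LinearMap.id := by
  ext v
  simp [intertwiner_apply, smul_smul, two_smul]

theorem intertwiner_comm (f : V →ₗ[ℂ] V) (hf₀ : ∀ v, h₀.conj (f v) = f (h₀.conj v))
    (hf₁ : ∀ v, h₁.conj (f v) = f (h₁.conj v)) (c : ℂ) (v : V) :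
    h₀.intertwiner h₁ c (f v) = f (h₀.intertwiner h₁ c v) := by
  simp [intertwiner_apply, hf₀, hf₁]

theorem exists_linearEquiv_conj_comm [FiniteDimensional ℂ V] :
    ∃ α : V ≃ₗ[ℂ] V, (∀ v, h₁.conj (α v) = α (h₀.conj v)) ∧
      ∀ f : V →ₗ[ℂ] V, (∀ v, h₀.conj (f v) = f (h₀.conj v)) →
        (∀ v, h₁.conj (f v) = f (h₁.conj v)) → ∀ v, α (f v) = f (α v) := by
  have hdet : LinearMap.det (h₀.intertwiner h₁ I) ≠ 0 := by simp [intertwiner_I]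
  obtain ⟨_, ⟨x, rfl⟩, hx⟩ := LinearMap.exists_mem_det_add_smul_ne_zero _ _ hdet
    (Set.infinite_range_of_injective ofReal_injective)
  refine ⟨LinearMap.equivOfIsUnitDet (f := h₀.intertwiner h₁ x) (isUnit_iff_ne_zero.mpr hx),
    fun v => ?_, fun f hf₀ hf₁ v => ?_⟩ <;> simp only [LinearMap.equivOfIsUnitDet_apply]
  · exact h₀.conj_intertwiner_ofReal h₁ x v
  · exact h₀.intertwiner_comm h₁ f hf₀ hf₁ x v

theorem map_eq_of_conj_comm (α : V ≃ₗ[ℂ] V) (hα : ∀ v, h₁.conj (α v) = α (h₀.conj v)) :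
    W₀.map (α.restrictScalars ℝ : V →ₗ[ℝ] V) = W₁ := by
  ext w
  rw [Submodule.mem_map_equiv, ← h₀.conj_eq_self_iff, ← h₁.conj_eq_self_iff,
    ← (α.restrictScalars ℝ).injective.eq_iff]
  simp [← hα]

end IsRealForm

end

theorem stmt6_general {G V : Type*} [Group G]
    [AddCommGroup V] [Module ℂ V] [Module ℝ V] [IsScalarTower ℝ ℂ V]
    [FiniteDimensional ℂ V]
    (ρ : Representation ℂ G V)
    (V₀ V₁ : Submodule ℝ V)
    (h₀inv : ∀ (g : G), ∀ v ∈ V₀, ρ g v ∈ V₀)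
    (h₁inv : ∀ (g : G), ∀ v ∈ V₁, ρ g v ∈ V₁)
    (h₀ : Function.Bijective fun p : V₀ × V₀ => (p.1 : V) + Complex.I • (p.2 : V))
    (h₁ : Function.Bijective fun p : V₁ × V₁ => (p.1 : V) + Complex.I • (p.2 : V)) :
    ∃ e : V₀ ≃ₗ[ℝ] V₁, ∀ (g : G) (v : V₀),
      (e ⟨ρ g (v : V), h₀inv g (v : V) v.2⟩ : V) = ρ g (e v : V) := by
  obtain ⟨α, hα, hα_comm⟩ := IsRealForm.exists_linearEquiv_conj_comm h₀ h₁
  refine ⟨(α.restrictScalars ℝ).submoduleMap V₀ ≪≫ₗ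
    LinearEquiv.ofEq _ _ (IsRealForm.map_eq_of_conj_comm h₀ h₁ α hα), fun g v => ?_⟩
  exact hα_comm (ρ g) (IsRealForm.conj_map_of_mapsTo h₀ (ρ g) (h₀inv g))
    (IsRealForm.conj_map_of_mapsTo h₁ (ρ g) (h₁inv g)) v

/-- Let `G` be a group and `ρ : G → GL(V)` a finite-dimensional
complex representation that is semisimple (every invariant subspace has an invariant
complement).  Then any two `ℝ`-structures of `ρ` are isomorphic as real
representations of `G`.  Here an `ℝ`-structure is a `ρ`-invariant real subspace
`V₀ ⊆ V` such that the canonical map `V₀ ⊗_ℝ ℂ → V`, `(a, b) ↦ a + i b`, is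
bijective, and an isomorphism of `ℝ`-structures is a `G`-equivariant `ℝ`-linear
equivalence. -/
theorem stmt6 {G V : Type*} [Group G]
    [AddCommGroup V] [Module ℂ V] [Module ℝ V] [IsScalarTower ℝ ℂ V]
    [FiniteDimensional ℂ V]
    (ρ : Representation ℂ G V)
    (hss : ∀ W : Submodule ℂ V, (∀ g : G, W.map (ρ g) ≤ W) →
      ∃ W' : Submodule ℂ V, (∀ g : G, W'.map (ρ g) ≤ W') ∧ IsCompl W W')
    (V₀ V₁ : Submodule ℝ V)
    (h₀inv : ∀ (g : G), ∀ v ∈ V₀, ρ g v ∈ V₀)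
    (h₁inv : ∀ (g : G), ∀ v ∈ V₁, ρ g v ∈ V₁)
    (h₀ : Function.Bijective fun p : V₀ × V₀ => (p.1 : V) + Complex.I • (p.2 : V))
    (h₁ : Function.Bijective fun p : V₁ × V₁ => (p.1 : V) + Complex.I • (p.2 : V)) :
    ∃ e : V₀ ≃ₗ[ℝ] V₁, ∀ (g : G) (v : V₀),
      (e ⟨ρ g (v : V), h₀inv g (v : V) v.2⟩ : V) = ρ g (e v : V) :=
  stmt6_general ρ V₀ V₁ h₀inv h₁inv h₀ h₁
end

section
/- Let T ⊆ S be an inclusion of tori over a local field k with S an induced torus (a finite product of Weil restrictions of G_m), such that the restriction map X_*(S)^{Γ_k} → X_*(T)^{Γ_k} realizes X_*(T)^{Γ_k} as a direct summand of X_*(S)^{Γ_k}. Then every unramified character of T(k) extends to an unramified character of S(k), and the restriction to T(k) of any unramified character of S(k) is unramified. -/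
/-- Let `ι : T(k) → S(k)` be an inclusion of (the rational points
of) tori over a local field `k`, with `S` an induced torus, such that
`X_*(T)^{Γ_k}` is a direct summand of `X_*(S)^{Γ_k}`.  The Harish-Chandra maps
`θ_T : T(k) → Hom(X^*(T)^{Γ}, ℝ)` and `θ_S : S(k) → Hom(X^*(S)^{Γ}, ℝ)` are related
by the dual `ρ` of the restriction map (`θ_S ∘ ι = ρ ∘ θ_T`), and the
direct-summand hypothesis supplies a retraction `r` with `r ∘ ρ = id`.  Then:
(1) the restriction to `T(k)` of any unramified character of `S(k)` is unramified
(a character is unramified iff it factors through `θ` via a homomorphism `ψ`);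
(2) every unramified character of `T(k)` extends to an unramified character of
`S(k)`. -/
theorem stmt17 {T S : Type*} [Group T] [Group S] (ι : T →* S)
    {X Y : Type*}
    (θT : T →* Multiplicative (X → ℝ)) (θS : S →* Multiplicative (Y → ℝ))
    (ρ : (X → ℝ) →+ (Y → ℝ)) (r : (Y → ℝ) →+ (X → ℝ))
    (hcompat : ∀ t : T, Multiplicative.toAdd (θS (ι t)) = ρ (Multiplicative.toAdd (θT t)))
    (hretract : ∀ x : X → ℝ, r (ρ x) = x) :
    -- (1) restriction of an unramified character is unramified
    (∀ χ : S →* ℂˣ,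
      (∃ ψ : (Y → ℝ) → ℂˣ, (∀ a b, ψ (a + b) = ψ a * ψ b) ∧
        ∀ s : S, χ s = ψ (Multiplicative.toAdd (θS s))) →
      ∃ ψT : (X → ℝ) → ℂˣ, (∀ a b, ψT (a + b) = ψT a * ψT b) ∧
        ∀ t : T, χ (ι t) = ψT (Multiplicative.toAdd (θT t))) ∧
    -- (2) every unramified character of T extends to an unramified character of S
    (∀ χ : T →* ℂˣ,
      (∃ ψT : (X → ℝ) → ℂˣ, (∀ a b, ψT (a + b) = ψT a * ψT b) ∧
        ∀ t : T, χ t = ψT (Multiplicative.toAdd (θT t))) →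
      ∃ χ' : S →* ℂˣ,
        (∃ ψ : (Y → ℝ) → ℂˣ, (∀ a b, ψ (a + b) = ψ a * ψ b) ∧
          ∀ s : S, χ' s = ψ (Multiplicative.toAdd (θS s))) ∧
        ∀ t : T, χ' (ι t) = χ t) := by
  constructor
  · rintro χ ⟨ψ, hψmul, hψ⟩
    refine ⟨fun x => ψ (ρ x), fun a b => by simp only []; rw [map_add, hψmul], fun t => ?_⟩
    rw [hψ (ι t), hcompat]
  · rintro χ ⟨ψT, hψmul, hψ⟩
    have hψ0 : ψT 0 = 1 := by
      have h := hψmul 0 0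
      rw [add_zero] at h
      exact (left_eq_mul.mp h)
    refine ⟨{ toFun := fun s => ψT (r (Multiplicative.toAdd (θS s)))
              map_one' := by simpa using hψ0
              map_mul' := fun a b => by
                simp only [map_mul]
                rw [show Multiplicative.toAdd (θS a * θS b)
                    = Multiplicative.toAdd (θS a) + Multiplicative.toAdd (θS b) from rfl,
                  map_add, hψmul] },
      ⟨fun y => ψT (r y), fun a b => by simp only []; rw [map_add, hψmul], fun s => rfl⟩, fun t => ?_⟩
    simp only [MonoidHom.coe_mk, OneHom.coe_mk]
    rw [hcompat, hretract, ← hψ]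
end
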